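/- Define K⁽⁰⁾ = K₀ + ½ sin(u₀/λ)|∇u₀|_{ḡ₀} F̄⁽¹⁾. Then R⁽⁰⁾ − |K⁽⁰⁾|²_{ḡ₀} = sin(u₀/λ)|∇u₀|_{ḡ₀} F̄⁽¹⁾_{ℓj}(−ḡ₀^{ij}∂ᵢN₀^ℓ + ½N₀(ḡ₀^{ℓj}) − K₀^{ℓj}) − 6cos(2u₀/λ)|∇u₀|²_{ḡ₀}F₀², where R⁽⁰⁾ = R(ḡ₀) − |∇u₀|²_{ḡ₀}F₀² − 7cos(2u₀/λ)|∇u₀|²_{ḡ₀}F₀² + sin(u₀/λ)|∇u₀|_{ḡ₀}F̄⁽¹⁾_{ℓj}(−ḡ₀^{ij}∂ᵢN₀^ℓ + ½N₀(ḡ₀^{ℓj})) is the λ⁰ coefficient of R(γ). In particular the right-hand side has no non-oscillating part. -/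
import Mathlib


/-!
Common setup: weighted Sobolev spaces on ℝ³, coordinate differential geometry,
high-frequency (oscillating) quantities, and the background solution of the
null-dust maximal constraint equations of Touati, "High-frequency solutions to
the constraint equations".
-/

noncomputable section

open Real MeasureTheory

/-- Points of `ℝ³ = Σ₀`, in Euclidean coordinates. -/
abbrev Pt : Type := Fin 3 → ℝ

/-- Riemannian metrics / symmetric 2-tensors on `ℝ³`, in coordinates. -/
abbrev Met : Type := Pt → Fin 3 → Fin 3 → ℝ

/-- Vector fields / 1-forms on `ℝ³`, in coordinates. -/
abbrev Vec : Type := Pt → Fin 3 → ℝ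

/-- Partial derivative `∂ᵢ` in the `i`-th Euclidean coordinate direction. -/
def pd (i : Fin 3) (f : Pt → ℝ) : Pt → ℝ := fun x => fderiv ℝ f x (Pi.single i 1)

/-- Euclidean length `|x|`. -/
def enorm3 (x : Pt) : ℝ := Real.sqrt (∑ i, x i ^ 2)

/-- Japanese bracket `⟨x⟩ = (1+|x|²)^{1/2}`. -/
def jap (x : Pt) : ℝ := Real.sqrt (1 + ∑ i, x i ^ 2)

/-- Weighted Sobolev norm of `W^{k,p}_δ`:
`‖u‖ = Σ_{0 ≤ i ≤ k} ‖⟨x⟩^{δ+i} ∇^i u‖_{L^p}`. -/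
def wNorm (k : ℕ) (p δ : ℝ) {F : Type*} [NormedAddCommGroup F] [NormedSpace ℝ F]
    (u : Pt → F) : ℝ :=
  ∑ i ∈ Finset.range (k + 1),
    (∫ x : Pt, (jap x ^ (δ + i) * ‖iteratedFDeriv ℝ i u x‖) ^ p) ^ (1 / p)

/-- Unweighted Sobolev `H^k` norm. -/
def sobNorm (k : ℕ) {F : Type*} [NormedAddCommGroup F] [NormedSpace ℝ F] (u : Pt → F) : ℝ :=
  ∑ i ∈ Finset.range (k + 1), (∫ x : Pt, ‖iteratedFDeriv ℝ i u x‖ ^ 2) ^ (1/2 : ℝ)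

/-- Weighted `C^k_β` norm. -/
def cNorm (k : ℕ) (β : ℝ) {F : Type*} [NormedAddCommGroup F] [NormedSpace ℝ F]
    (u : Pt → F) : ℝ :=
  ∑ i ∈ Finset.range (k + 1), ⨆ x : Pt, jap x ^ (β + i) * ‖iteratedFDeriv ℝ i u x‖

/-- The single weighted `L²` norm `‖⟨x⟩^w ∇^r u‖_{L²}`. -/
def dSliceNorm (r : ℕ) (w : ℝ) {F : Type*} [NormedAddCommGroup F] [NormedSpace ℝ F]
    (u : Pt → F) : ℝ :=
  (∫ x : Pt, (jap x ^ w * ‖iteratedFDeriv ℝ r u x‖) ^ 2) ^ (1/2 : ℝ)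

/-- `L^∞` norm of the `r`-th derivative, `‖∇^r u‖_{L^∞}`. -/
def dSupNorm (r : ℕ) {F : Type*} [NormedAddCommGroup F] [NormedSpace ℝ F] (u : Pt → F) : ℝ :=
  ⨆ x : Pt, ‖iteratedFDeriv ℝ r u x‖

/-- Membership in the weighted Sobolev space `W^{k,p}_δ`. -/
def MemW (k : ℕ) (p δ : ℝ) {F : Type*} [NormedAddCommGroup F] [NormedSpace ℝ F]
    (u : Pt → F) : Prop :=
  ContDiff ℝ k u ∧ ∀ i ≤ k,
    Integrable (fun x : Pt => (jap x ^ (δ + i) * ‖iteratedFDeriv ℝ i u x‖) ^ p)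

/-- Coordinates of the Euclidean metric `e`. -/
def eMat : Fin 3 → Fin 3 → ℝ := fun i j => if i = j then 1 else 0

/-- Pointwise inverse metric `g^{ij}`. -/
def minv (g : Met) : Met := fun x i j => (Matrix.of (g x))⁻¹ i j

/-- `g` is a Riemannian metric: positive definite and symmetric at each point. -/
def RiemMetric (g : Met) : Prop :=
  (∀ x, (Matrix.of (g x)).PosDef) ∧ ∀ x i j, g x i j = g x j i

/-- Christoffel symbols `Γ(g)^k_{ij}`. -/
def christ (g : Met) (x : Pt) (k i j : Fin 3) : ℝ :=
  (1/2) * ∑ l, minv g x k l *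
    (pd i (fun y => g y l j) x + pd j (fun y => g y l i) x - pd l (fun y => g y i j) x)

/-- Scalar curvature `R(g)`. -/
def scal (g : Met) (x : Pt) : ℝ :=
  ∑ i, ∑ j, minv g x i j *
    ((∑ k, pd k (fun y => christ g y k i j) x)
      - (∑ k, pd i (fun y => christ g y k j k) x)
      + (∑ k, ∑ l, christ g x k k l * christ g x l i j)
      - (∑ k, ∑ l, christ g x k i l * christ g x l j k))

/-- `|∇u|_g = (g^{ij} ∂ᵢu ∂ⱼu)^{1/2}`. -/
def gnorm (g : Met) (u : Pt → ℝ) (x : Pt) : ℝ :=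
  Real.sqrt (∑ i, ∑ j, minv g x i j * pd i u x * pd j u x)

/-- Trace `tr_g T = g^{ij} T_{ij}`. -/
def trg (g : Met) (T : Met) (x : Pt) : ℝ := ∑ i, ∑ j, minv g x i j * T x i j

/-- `|T·S|_g = g^{ij} g^{kl} T_{ik} S_{jl}`. -/
def dot2 (g : Met) (T S : Met) (x : Pt) : ℝ :=
  ∑ i, ∑ j, ∑ k, ∑ l, minv g x i j * minv g x k l * T x i k * S x j l

/-- Covariant derivative `D_i W_j` of a 1-form. -/
def covV (g : Met) (W : Vec) (x : Pt) (i j : Fin 3) : ℝ :=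
  pd i (fun y => W y j) x - ∑ a, christ g x a i j * W x a

/-- Divergence of a 1-form, `div_g W = g^{ij} D_i W_j`. -/
def divV (g : Met) (W : Vec) (x : Pt) : ℝ := ∑ i, ∑ j, minv g x i j * covV g W x i j

/-- Divergence of a symmetric 2-tensor, `(div_g T)_l = g^{kj} D_k T_{jl}`. -/
def divT (g : Met) (T : Met) (x : Pt) (l : Fin 3) : ℝ :=
  ∑ k, ∑ j, minv g x k j *
    (pd k (fun y => T y j l) x - (∑ a, christ g x a k j * T x a l)
      - ∑ a, christ g x a k l * T x j a)

/-- Conformal Killing operator `(L_g W)_{ij} = D_{(i}W_{j)} - (2/3)(div_g W) g_{ij}`. -/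
def confKill (g : Met) (W : Vec) : Met := fun x i j =>
  covV g W x i j + covV g W x j i - (2/3) * divV g W x * g x i j

/-- Laplace-Beltrami operator `Δ_g f = g^{ij}(∂ᵢ∂ⱼ f - Γ^k_{ij} ∂_k f)`. -/
def lapB (g : Met) (f : Pt → ℝ) (x : Pt) : ℝ :=
  ∑ i, ∑ j, minv g x i j * (pd i (pd j f) x - ∑ k, christ g x k i j * pd k f x)

/-- Flat Laplacian `Δ = Σᵢ ∂ᵢ²`. -/
def lapE (f : Pt → ℝ) (x : Pt) : ℝ := ∑ i, pd i (pd i f) x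

/-- Flat conformal Killing operator
`(L_e W)_{ij} = ∂ᵢW_j + ∂ⱼW_i - (2/3)(Σ_k ∂_k W_k) e_{ij}`. -/
def confKillE (W : Vec) : Met := fun x i j =>
  pd i (fun y => W y j) x + pd j (fun y => W y i) x
    - (2/3) * (∑ k, pd k (fun y => W y k) x) * eMat i j

/-- Flat conformal Laplacian `(div_e L_e W)_l = Σ_k ∂_k (L_e W)_{kl}`. -/
def divLe (W : Vec) (x : Pt) (l : Fin 3) : ℝ :=
  ∑ k, pd k (fun y => confKillE W y k l) x

/-- An oscillating quantity: a trigonometric polynomial in the fast variable `θ`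
with coefficients depending only on `x`. -/
def IsOsc {F : Type*} [NormedAddCommGroup F] [NormedSpace ℝ F] (f : ℝ → Pt → F) : Prop :=
  ∃ n : ℕ, ∃ a b : ℕ → Pt → F, ∀ θ x,
    f θ x = ∑ k ∈ Finset.range n, (Real.cos (k * θ) • a k x + Real.sin (k * θ) • b k x)

/-- Derivative `∂_θ` with respect to the fast variable. -/
def oscD {F : Type*} [NormedAddCommGroup F] [NormedSpace ℝ F] (f : ℝ → Pt → F) :
    ℝ → Pt → F := fun θ x => deriv (fun t => f t x) θ

/-- Size of the coefficients of `g⁻¹`. -/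
def invAbs (g : Met) (x : Pt) : ℝ := ∑ i, ∑ j, |minv g x i j|

/-- Size of the coefficients of `g`. -/
def metAbs (g : Met) (x : Pt) : ℝ := ∑ i, ∑ j, |g x i j|

/-- Size of the first derivatives `∂g`. -/
def d1Abs (g : Met) (x : Pt) : ℝ := ∑ k, ∑ i, ∑ j, |pd k (fun y => g y i j) x|

/-- Size of the second derivatives `∂²g`. -/
def d2Abs (g : Met) (x : Pt) : ℝ := ∑ k, ∑ l, ∑ i, ∑ j, |pd k (pd l (fun y => g y i j)) x|

/-- Size of `g⁻¹ - e⁻¹`. -/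
def invDiffAbs (g : Met) (x : Pt) : ℝ := ∑ i, ∑ j, |minv g x i j - eMat i j|

/-- Size of an oscillating quantity (no derivatives). -/
def oscAbs0 {F : Type*} [NormedAddCommGroup F] [NormedSpace ℝ F]
    (f : ℝ → Pt → F) (θ : ℝ) (x : Pt) : ℝ := ‖f θ x‖

/-- Size of the first (spatial and fast) derivatives of an oscillating quantity. -/
def oscAbs1 {F : Type*} [NormedAddCommGroup F] [NormedSpace ℝ F]
    (f : ℝ → Pt → F) (θ : ℝ) (x : Pt) : ℝ :=
  ‖iteratedFDeriv ℝ 1 (f θ) x‖ + ‖oscD f θ x‖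

/-- Size of the second (spatial and fast) derivatives of an oscillating quantity. -/
def oscAbs2 {F : Type*} [NormedAddCommGroup F] [NormedSpace ℝ F]
    (f : ℝ → Pt → F) (θ : ℝ) (x : Pt) : ℝ :=
  ‖iteratedFDeriv ℝ 2 (f θ) x‖ + ‖iteratedFDeriv ℝ 1 (oscD f θ) x‖ + ‖oscD (oscD f) θ x‖

/-- The oscillating conformal factor coefficient `φ⁽³⁾` built from its three
trigonometric components. -/
def phi3fam (p1 p2 p3 : Pt → ℝ) : ℝ → Pt → ℝ := fun θ x =>
  Real.cos θ * p1 x + Real.sin (2*θ) * p2 x + Real.cos (3*θ) * p3 x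

/-- The background solution `(ḡ₀, K₀, F₀, u₀)` of the null-dust maximal constraint
equations, asymptotically Euclidean with smallness parameter `ε`, together with the
orthonormal tangent frame `(e₁,e₂)` of the level sets of `u₀` and the polarization
constants `(c11, c12)` of `ω⁽¹⁾`. -/
structure Background where
  g0 : Met
  K0 : Met
  F0 : Pt → ℝ
  u0 : Pt → ℝ
  /-- regularity index `N` -/
  Nn : ℕ
  /-- decay rate `δ` -/
  del : ℝ
  /-- smallness parameter `ε` -/
  eps : ℝ
  /-- support radius `R` -/
  Rr : ℝ
  /-- the constant vector `𝔷` -/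
  zz : Fin 3 → ℝ
  c11 : ℝ
  c12 : ℝ
  fr1 : Vec
  fr2 : Vec
  riem : RiemMetric g0
  symK0 : ∀ x i j, K0 x i j = K0 x j i
  hN : 10 ≤ Nn
  hdel : -(3/2) < del
  heps : 0 < eps
  hR : 0 < Rr
  hz : zz ≠ 0
  grad_pos : ∀ x, 0 < gnorm g0 u0 x
  /-- Hamiltonian constraint with null dust source -/
  ham : ∀ x, scal g0 x - dot2 g0 K0 K0 x = 2 * gnorm g0 u0 x ^ 2 * F0 x ^ 2
  /-- momentum constraint with null dust source -/
  mom : ∀ x l, -divT g0 K0 x l = gnorm g0 u0 x * F0 x ^ 2 * pd l u0 x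
  /-- maximal slice -/
  maximal : ∀ x, trg g0 K0 x = 0
  est_bg : wNorm (Nn + 1) 2 del (fun x i j => g0 x i j - eMat i j)
      + wNorm Nn 2 (del + 1) K0 ≤ eps
  supp_F0 : ∀ x, Rr < enorm3 x → F0 x = 0
  est_F0 : sobNorm Nn F0 ≤ eps
  est_u0 : wNorm Nn 2 (del + 1) (fun x i => pd i u0 x - zz i) ≤ eps
  /-- polarization normalisation `(ω⁽¹⁾₁₁)² + (ω⁽¹⁾₁₂)² = 4` -/
  pol : c11 ^ 2 + c12 ^ 2 = 4
  fr_unit1 : ∀ x, (∑ i, ∑ j, g0 x i j * fr1 x i * fr1 x j) = 1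
  fr_unit2 : ∀ x, (∑ i, ∑ j, g0 x i j * fr2 x i * fr2 x j) = 1
  fr_orth : ∀ x, (∑ i, ∑ j, g0 x i j * fr1 x i * fr2 x j) = 0
  fr_tan1 : ∀ x, (∑ i, pd i u0 x * fr1 x i) = 0
  fr_tan2 : ∀ x, (∑ i, pd i u0 x * fr2 x i) = 0

namespace Background

variable (B : Background)

/-- The unit normal `N₀ = -ḡ₀^{ij}∂ᵢu₀∂ⱼ / |∇u₀|_{ḡ₀}` to the level sets of `u₀`. -/
def Nvec : Vec := fun x k => -(∑ i, minv B.g0 x k i * pd i B.u0 x) / gnorm B.g0 B.u0 x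

/-- `(N₀)_l`, the 1-form obtained from `N₀` by lowering with `ḡ₀`. -/
def Nlow : Vec := fun x l => ∑ k, B.g0 x l k * B.Nvec x k

/-- Lowering of a vector field with `ḡ₀`. -/
def lo (v : Vec) : Vec := fun x i => ∑ j, B.g0 x i j * v x j

/-- The polarization tensor `ω⁽¹⁾`, with constant coefficients in the frame
`(N₀, e₁, e₂)`, satisfying `ω⁽¹⁾_{N₀ i} = 0`, `ω⁽¹⁾₁₁ + ω⁽¹⁾₂₂ = 0`. -/
def omega1 : Met := fun x i j =>
  B.c11 * (B.lo B.fr1 x i * B.lo B.fr1 x j - B.lo B.fr2 x i * B.lo B.fr2 x j)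
  + B.c12 * (B.lo B.fr1 x i * B.lo B.fr2 x j + B.lo B.fr2 x i * B.lo B.fr1 x j)

/-- `F̄⁽¹⁾ = F₀ ω⁽¹⁾`. -/
def F1 : Met := fun x i j => B.F0 x * B.omega1 x i j

/-- Raising of a 2-tensor with `ḡ₀`. -/
def raise (T : Met) : Met := fun x i j => ∑ a, ∑ b, minv B.g0 x i a * minv B.g0 x j b * T x a b

/-- `K₀^{kl}`, the second fundamental form with both indices raised by `ḡ₀`. -/
def kup : Pt → Fin 3 → Fin 3 → ℝ := fun x k l => B.raise B.K0 x k l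

/-- `N₀(ḡ₀^{lm})`, the derivative of the inverse metric along `N₀`. -/
def nDerInv (x : Pt) (l m : Fin 3) : ℝ :=
  ∑ a, B.Nvec x a * pd a (fun y => minv B.g0 y l m) x

/-- `N₀ T_{ij}`, the derivative of a 2-tensor along `N₀`. -/
def nDer (T : Met) (x : Pt) (i j : Fin 3) : ℝ := ∑ m, B.Nvec x m * pd m (fun y => T y i j) x

/-- The 1-form `ξ` whose tangential part gives the nonzero components
`ω⁽²⁾_{N₀ j}` of `ω⁽²⁾`. -/
def xi2 : Vec := fun x j =>
  (gnorm B.g0 B.u0 x ^ 2)⁻¹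
      * divT B.g0 (fun y a b => gnorm B.g0 B.u0 y * B.F1 y a b) x j
  - (gnorm B.g0 B.u0 x)⁻¹ *
      ∑ i, B.F1 x i j *
        ((∑ l, B.Nvec x l * (pd l (fun y => B.Nvec y i) x
            + ∑ m, christ B.g0 x i l m * B.Nvec x m))
          - ∑ k, minv B.g0 x i k * (∑ m, B.Nvec x m * B.K0 x m k))

/-- The correction tensor `ω⁽²⁾`, whose only nonzero frame components are
`ω⁽²⁾_{N₀ j}` for tangential `j`. -/
def omega2 : Met := fun x i j =>
  B.Nlow x i * (B.xi2 x j - B.Nlow x j * (∑ l, B.Nvec x l * B.xi2 x l))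
  + B.Nlow x j * (B.xi2 x i - B.Nlow x i * (∑ l, B.Nvec x l * B.xi2 x l))

/-- The oscillating metric
`γ = ḡ₀ + λ cos(u₀/λ) F̄⁽¹⁾ + λ² sin(u₀/λ) ω⁽²⁾`. -/
def gam (lam : ℝ) : Met := fun x i j =>
  B.g0 x i j + lam * Real.cos (B.u0 x / lam) * B.F1 x i j
    + lam ^ 2 * Real.sin (B.u0 x / lam) * B.omega2 x i j

/-- Evaluation of an oscillating quantity at the fast variable `θ = u₀/λ`. -/
def ev {F : Type*} (lam : ℝ) (f : ℝ → Pt → F) : Pt → F := fun x => f (B.u0 x / lam) x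

/-- The leading oscillating part `Γ̃⁽⁰⁾` of the Christoffel symbols of `γ`,
as a function of the fast variable `θ`. -/
def tGam0 (θ : ℝ) (x : Pt) (k i j : Fin 3) : ℝ :=
  -(1/2) * Real.sin θ * ∑ l, minv B.g0 x k l *
    (pd i B.u0 x * B.F1 x l j + pd j B.u0 x * B.F1 x l i - pd l B.u0 x * B.F1 x i j)

/-- `𝐝^{[-1]}_l(A) = -|∇u₀|_{ḡ₀} ∂_θ A_{N₀ l}`. -/
def dm1 (A : ℝ → Pt → Fin 3 → Fin 3 → ℝ) : ℝ → Vec := fun θ x l =>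
  -(gnorm B.g0 B.u0 x) * ∑ j, B.Nvec x j * oscD A θ x j l

/-- `𝐝^{[0]}_l(A) = (div_{ḡ₀} A)_l - ḡ₀^{ij} (Γ̃⁽⁰⁾)^a_{il} A_{aj}`. -/
def dz (A : ℝ → Pt → Fin 3 → Fin 3 → ℝ) : ℝ → Vec := fun θ x l =>
  divT B.g0 (fun y => A θ y) x l
    - ∑ i, ∑ j, minv B.g0 x i j * ∑ a, B.tGam0 θ x a i l * A θ x a j

/-- `𝐊^{[-1]}_{ij}(W) = ∂_{(i}u₀ ∂_θW_{j)} + (2/3)|∇u₀|(ḡ₀)_{ij} ∂_θW_{N₀}`. -/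
def km1 (W : ℝ → Vec) : ℝ → Pt → Fin 3 → Fin 3 → ℝ := fun θ x i j =>
  pd i B.u0 x * oscD W θ x j + pd j B.u0 x * oscD W θ x i
    + (2/3) * gnorm B.g0 B.u0 x * B.g0 x i j * ∑ k, B.Nvec x k * oscD W θ x k

/-- `𝐊^{[0]}_{ij}(W)`, the `λ⁰` coefficient of the conformal Killing operator on
an oscillating 1-form. -/
def kz (W : ℝ → Vec) : ℝ → Pt → Fin 3 → Fin 3 → ℝ := fun θ x i j =>
  covV B.g0 (W θ) x i j + covV B.g0 (W θ) x j i
    - 2 * (∑ k, W θ x k * B.tGam0 θ x k i j)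
    + (2/3) * Real.cos θ * gnorm B.g0 B.u0 x * B.F1 x i j
        * (∑ k, B.Nvec x k * oscD W θ x k)
    - (2/3) * divV B.g0 (W θ) x * B.g0 x i j

/-- `M^{[-1]}_l(β) = |∇u₀|² cos θ ḡ₀^{ij} F̄⁽¹⁾_{il} β_j`, as a function of `θ`. -/
def Mm1fam (β : Vec) : ℝ → Vec := fun θ x l =>
  gnorm B.g0 B.u0 x ^ 2 * Real.cos θ * ∑ i, ∑ j, minv B.g0 x i j * B.F1 x i l * β x j

/-- `tr_{F̄⁽¹⁾} T = ḡ₀^{ik} ḡ₀^{jl} F̄⁽¹⁾_{kl} T_{ij}`. -/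
def trF1 (T : Met) (x : Pt) : ℝ :=
  ∑ i, ∑ j, ∑ k, ∑ l, minv B.g0 x i k * minv B.g0 x j l * B.F1 x k l * T x i j

/-- The bracket `ḡ₀^{ij}∂ᵢN₀^l - (1/2) N₀(ḡ₀^{lm}) + K₀^{lm}`. -/
def brkt (x : Pt) (l m : Fin 3) : ℝ :=
  (∑ i, minv B.g0 x i m * pd i (fun y => B.Nvec y l) x)
    - (1/2) * B.nDerInv x l m + B.kup x l m

/-- `F̄⁽²'¹⁾`. -/
def F21 : Met := fun x i j =>
  (1 / (2 * gnorm B.g0 B.u0 x)) * (∑ l, ∑ m, B.F1 x l m * B.brkt x l m) * B.g0 x i j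
    + B.omega2 x i j

/-- `F̄⁽²'²⁾ = (3/4) F₀² ḡ₀`. -/
def F22 : Met := fun x i j => (3/4) * B.F0 x ^ 2 * B.g0 x i j

/-- The scalar coefficient `K₀^{kl}∂ₖu₀∂ₗu₀ + ḡ₀^{kl}∂ₖu₀∂ₗ|∇u₀| - (1/2)ḡ₀^{kl}∂ₖ∂ₗu₀`. -/
def scalCoef (x : Pt) : ℝ :=
  (∑ k, ∑ l, B.kup x k l * pd k B.u0 x * pd l B.u0 x)
  + (∑ k, ∑ l, minv B.g0 x k l * pd k B.u0 x * pd l (gnorm B.g0 B.u0) x)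
  - (1/2) * ∑ k, ∑ l, minv B.g0 x k l * pd k (pd l B.u0) x

/-- The oscillating coefficient `K⁽¹⁾` of the second fundamental form. -/
def K1fam : ℝ → Pt → Fin 3 → Fin 3 → ℝ := fun θ x i j =>
  -(1/2) * Real.cos θ *
    (-(B.nDer B.F1 x i j)
      + (∑ k, ∑ l, (-(minv B.g0 x k l * B.K0 x i l)
          + B.Nvec x l * christ B.g0 x k l i) * B.F1 x j k)
      + (∑ k, ∑ l, (-(minv B.g0 x k l * B.K0 x j l)
          + B.Nvec x l * christ B.g0 x k l j) * B.F1 x i k)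
      + (gnorm B.g0 B.u0 x)⁻¹ * (-(B.scalCoef x)) * B.F1 x i j)
  - (1/2) * gnorm B.g0 B.u0 x *
      (Real.cos θ * B.F21 x i j - 2 * Real.sin (2*θ) * B.F22 x i j)

/-- The oscillating mean curvature coefficient
`τ⁽¹⁾ = -cos θ |F̄⁽¹⁾·K₀|_{ḡ₀} + tr_{ḡ₀} K⁽¹⁾`. -/
def tau1 : ℝ → Pt → ℝ := fun θ x =>
  -Real.cos θ * dot2 B.g0 B.F1 B.K0 x + trg B.g0 (B.K1fam θ) x

/-- The mean curvature `τ = λ τ⁽¹⁾(u₀/λ)`. -/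
def tauFun (lam : ℝ) : Pt → ℝ := fun x => lam * B.tau1 (B.u0 x / lam) x

/-- The oscillating conformal factor coefficient `φ⁽²⁾`. -/
def phi2 : ℝ → Pt → ℝ := fun θ x =>
  (1 / (8 * gnorm B.g0 B.u0 x)) * Real.sin θ * (∑ l, ∑ m, B.F1 x l m * B.brkt x l m)
    + (3/16) * Real.cos (2*θ) * B.F0 x ^ 2

/-- The full conformal factor `φ = 1 + λ²(φ⁽²⁾ + φ̃) + λ³ φ⁽³⁾`. -/
def phiFun (lam : ℝ) (φt : Pt → ℝ) (p1 p2 p3 : Pt → ℝ) : Pt → ℝ := fun x =>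
  1 + lam ^ 2 * (B.ev lam B.phi2 x + φt x)
    + lam ^ 3 * B.ev lam (phi3fam p1 p2 p3) x

/-- `σ⁽⁰⁾ = K⁽⁰⁾ = K₀ + (1/2) sin θ |∇u₀| F̄⁽¹⁾`. -/
def sig0fam : ℝ → Pt → Fin 3 → Fin 3 → ℝ := fun θ x i j =>
  B.K0 x i j + (1/2) * Real.sin θ * gnorm B.g0 B.u0 x * B.F1 x i j

/-- `σ⁽¹⁾ = K⁽¹⁾ - (1/3) τ⁽¹⁾ ḡ₀ - 𝐊^{[-1]}(W⁽²⁾)`. -/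
def sig1fam (W2 : ℝ → Vec) : ℝ → Pt → Fin 3 → Fin 3 → ℝ := fun θ x i j =>
  B.K1fam θ x i j - (1/3) * B.tau1 θ x * B.g0 x i j - B.km1 W2 θ x i j

/-- `H^{[-1]}(f)`, the `λ⁻¹` coefficient of `Δ_γ` on oscillating scalars. -/
def hm1fam (f : ℝ → Pt → ℝ) : ℝ → Pt → ℝ := fun θ x =>
  2 * (∑ i, ∑ j, minv B.g0 x i j * pd i B.u0 x * pd j (oscD f θ) x)
  + (∑ i, ∑ j, minv B.g0 x i j * pd i (pd j B.u0) x) * oscD f θ x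
  - (∑ i, ∑ j, ∑ k, minv B.g0 x i j * christ B.g0 x k i j * pd k B.u0 x) * oscD f θ x

/-- The `λ⁰` coefficient `R⁽⁰⁾` of the scalar curvature of `γ`,
as a function of `θ`. -/
def R0fam : ℝ → Pt → ℝ := fun θ x =>
  scal B.g0 x - gnorm B.g0 B.u0 x ^ 2 * B.F0 x ^ 2
    - 7 * Real.cos (2*θ) * gnorm B.g0 B.u0 x ^ 2 * B.F0 x ^ 2
    + Real.sin θ * gnorm B.g0 B.u0 x *
        ∑ l, ∑ j, B.F1 x l j *
          (-(∑ i, minv B.g0 x i j * pd i (fun y => B.Nvec y l) x)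
            + (1/2) * B.nDerInv x l j)

/-- The part of `∂²γ` of order `λ⁰` or more, in size. -/
def d2ge0 (lam : ℝ) : Pt → ℝ := fun x =>
  ∑ k, ∑ l, ∑ i, ∑ j,
    |pd k (pd l (fun y => B.gam lam y i j)) x
      + lam⁻¹ * Real.cos (B.u0 x / lam) * pd k B.u0 x * pd l B.u0 x * B.F1 x i j|

/-- `𝐌^{[-2]}(W) = 𝐝^{[-1]}(𝐊^{[-1]}(W))`. -/
def M2osc (W : ℝ → Vec) : ℝ → Vec := B.dm1 (B.km1 W)

/-- `𝐌^{[-1]}(W) = 𝐝^{[-1]}(𝐊^{[0]}(W)) + 𝐝^{[0]}(𝐊^{[-1]}(W))`. -/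
def M1osc (W : ℝ → Vec) : ℝ → Vec := fun θ x l =>
  B.dm1 (B.kz W) θ x l + B.dz (B.km1 W) θ x l

/-- `M^{[≥0]}(Y)`, the `λ^{≥0}` tail of the conformal Laplacian of `γ` on a
non-oscillating 1-form. -/
def Mge0 (lam : ℝ) (Y : Vec) : Vec := fun x l =>
  divT (B.gam lam) (confKill (B.gam lam) Y) x l - lam⁻¹ * B.Mm1fam Y (B.u0 x / lam) x l

/-- `𝐌^{[≥0]}(W)`, the `λ^{≥0}` tail of the conformal Laplacian of `γ` on an
oscillating 1-form. -/
def MgeZeroOsc (lam : ℝ) (W : ℝ → Vec) : Vec := fun x l =>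
  divT (B.gam lam) (confKill (B.gam lam) (B.ev lam W)) x l
    - (lam ^ 2)⁻¹ * B.M2osc W (B.u0 x / lam) x l - lam⁻¹ * B.M1osc W (B.u0 x / lam) x l

/-- `𝐌^{[≥-1]}(W)`, the `λ^{≥-1}` tail of the conformal Laplacian of `γ` on an
oscillating 1-form, after removing the `λ⁻²` level. -/
def MgeNegOneOsc (lam : ℝ) (W : ℝ → Vec) : Vec := fun x l =>
  lam * (divT (B.gam lam) (confKill (B.gam lam) (B.ev lam W)) x l
    - (lam ^ 2)⁻¹ * B.M2osc W (B.u0 x / lam) x l)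

/-- `𝐝^{[≥0]}(A)`, the `λ^{≥0}` tail of `div_γ` on an oscillating 2-tensor. -/
def dgeZero (A : ℝ → Pt → Fin 3 → Fin 3 → ℝ) (lam : ℝ) : Vec := fun x l =>
  divT (B.gam lam) (B.ev lam A) x l - lam⁻¹ * B.dm1 A (B.u0 x / lam) x l

/-- `𝐝^{[≥1]}(A)`, the `λ^{≥1}` tail of `div_γ` on an oscillating 2-tensor. -/
def dgeOne (A : ℝ → Pt → Fin 3 → Fin 3 → ℝ) (lam : ℝ) : Vec := fun x l =>
  lam⁻¹ * (B.dgeZero A lam x l - B.dz A (B.u0 x / lam) x l)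

/-- The `λ¹` coefficient `(γ⁻¹)⁽¹⁾ = -cos θ F̄⁽¹⁾`(indices raised). -/
def inv1coef : ℝ → Pt → Fin 3 → Fin 3 → ℝ := fun θ x i j =>
  -Real.cos θ * B.raise B.F1 x i j

/-- The `λ²` coefficient `(γ⁻¹)⁽²⁾ = cos²θ ḡ₀^{ik}F̄^{jl}F̄_{kl} - sin θ ω⁽²⁾^{ij}`. -/
def inv2coef : ℝ → Pt → Fin 3 → Fin 3 → ℝ := fun θ x i j =>
  Real.cos θ ^ 2 * (∑ k, ∑ l, minv B.g0 x i k * B.raise B.F1 x j l * B.F1 x k l)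
    - Real.sin θ * B.raise B.omega2 x i j

/-- `(γ⁻¹)^{(≥1)}`, the `λ^{≥1}` tail of the inverse metric. -/
def invGe1 (lam : ℝ) : Met := fun x i j =>
  lam⁻¹ * (minv (B.gam lam) x i j - minv B.g0 x i j)

/-- `(γ⁻¹)^{(≥2)}`. -/
def invGe2 (lam : ℝ) : Met := fun x i j =>
  lam⁻¹ * (B.invGe1 lam x i j - B.ev lam B.inv1coef x i j)

/-- `(γ⁻¹)^{(≥3)}`. -/
def invGe3 (lam : ℝ) : Met := fun x i j =>
  lam⁻¹ * (B.invGe2 lam x i j - B.ev lam B.inv2coef x i j)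

/-- The scalar function
`𝔣 = -tr_{γ^{(≥1)}}σ⁽²⁾ - tr_{γ^{(≥2)}}σ⁽¹⁾ - tr_{γ^{(≥3)}}σ⁽⁰⁾`. -/
def ffun (lam : ℝ) (W2 : ℝ → Vec) (s2 : ℝ → Pt → Fin 3 → Fin 3 → ℝ) : Pt → ℝ := fun x =>
  -(∑ i, ∑ j, B.invGe1 lam x i j * s2 (B.u0 x / lam) x i j)
  - (∑ i, ∑ j, B.invGe2 lam x i j * B.sig1fam W2 (B.u0 x / lam) x i j)
  - (∑ i, ∑ j, B.invGe3 lam x i j * B.sig0fam (B.u0 x / lam) x i j)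

/-- `𝐇^{[≥0]}(f)`, the `λ^{≥0}` tail of `Δ_γ` on an oscillating scalar. -/
def HgeZero (lam : ℝ) (f : ℝ → Pt → ℝ) : Pt → ℝ := fun x =>
  lapB (B.gam lam) (B.ev lam f) x
    - (lam ^ 2)⁻¹ * gnorm B.g0 B.u0 x ^ 2 * oscD (oscD f) (B.u0 x / lam) x
    - lam⁻¹ * B.hm1fam f (B.u0 x / lam) x

/-- `𝐇^{[≥-1]}(f)`, the `λ^{≥-1}` tail of `Δ_γ` on an oscillating scalar. -/
def HgeNegOne (lam : ℝ) (f : ℝ → Pt → ℝ) : Pt → ℝ := fun x =>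
  lam * (lapB (B.gam lam) (B.ev lam f) x
    - (lam ^ 2)⁻¹ * gnorm B.g0 B.u0 x ^ 2 * oscD (oscD f) (B.u0 x / lam) x)

/-- `R^{(≥2)}`, the `λ^{≥2}` tail of the scalar curvature of `γ`, given the
`λ¹` coefficients `(S1, S2, S3)` of `R⁽¹⁾`. -/
def Rge2fun (lam : ℝ) (S1 S2 S3 : Pt → ℝ) : Pt → ℝ := fun x =>
  (lam ^ 2)⁻¹ * (scal (B.gam lam) x - B.R0fam (B.u0 x / lam) x
    - lam * (Real.cos (B.u0 x / lam) * S1 x + Real.sin (2 * B.u0 x / lam) * S2 x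
        + Real.cos (3 * B.u0 x / lam) * S3 x))

/-- `W⁽³⁾(W̃)_l = cos θ ḡ₀^{ij} F̄⁽¹⁾_{il} W̃_j + W^{(3,rest)}_l`. -/
def W3fun (W3rest : ℝ → Vec) (Wt : Vec) : ℝ → Vec := fun θ x l =>
  Real.cos θ * (∑ i, ∑ j, minv B.g0 x i j * B.F1 x i l * Wt x j) + W3rest θ x l

/-- The full vector unknown `W = λ²(W⁽²⁾ + W̃) + λ³ W⁽³⁾(W̃)`. -/
def WFull (lam : ℝ) (W2 : ℝ → Vec) (W3rest : ℝ → Vec) (Wt : Vec) : Vec := fun x l =>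
  lam ^ 2 * (B.ev lam W2 x l + Wt x l) + lam ^ 3 * B.ev lam (B.W3fun W3rest Wt) x l

end Background
/-- Lemma 5.1: with `K⁽⁰⁾ = K₀ + (1/2) sin(u₀/λ)|∇u₀|_{ḡ₀}F̄⁽¹⁾`,
the quantity `R⁽⁰⁾ - |K⁽⁰⁾|²_{ḡ₀}` is purely oscillating and given explicitly. -/
theorem hamiltonian_zero_level (B : Background) :
    ∀ lam : ℝ, 0 < lam → lam ≤ 1 → ∀ x : Pt,
      B.R0fam (B.u0 x / lam) x
          - dot2 B.g0 (fun y => B.sig0fam (B.u0 y / lam) y)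
              (fun y => B.sig0fam (B.u0 y / lam) y) x
        = Real.sin (B.u0 x / lam) * gnorm B.g0 B.u0 x *
            (∑ l, ∑ j, B.F1 x l j *
              (-(∑ i, minv B.g0 x i j * pd i (fun y => B.Nvec y l) x)
                + (1/2) * B.nDerInv x l j - B.raise B.K0 x l j))
          - 6 * Real.cos (2 * B.u0 x / lam) * gnorm B.g0 B.u0 x ^ 2 * B.F0 x ^ 2 := by
  intro lam hlam _ x
  -- matrix facts
  have hdet : IsUnit (Matrix.of (B.g0 x)).det :=
    isUnit_iff_ne_zero.mpr (B.riem.1 x).det_pos.ne'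
  have hinv : (Matrix.of (B.g0 x))⁻¹ * Matrix.of (B.g0 x) = 1 :=
    Matrix.nonsing_inv_mul _ hdet
  have hAsym : (Matrix.of (B.g0 x)).transpose = Matrix.of (B.g0 x) := by
    ext i j
    exact B.riem.2 x j i
  have hMsym : ∀ i j : Fin 3, minv B.g0 x i j = minv B.g0 x j i := by
    intro i j
    have h : ((Matrix.of (B.g0 x))⁻¹).transpose = (Matrix.of (B.g0 x))⁻¹ := by
      rw [Matrix.transpose_nonsing_inv, hAsym]
    have h2 := congrFun (congrFun h j) i
    simpa [minv, Matrix.transpose_apply] using h2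
  have hM01 : minv B.g0 x 0 1 = minv B.g0 x 1 0 := hMsym 0 1
  have hM02 : minv B.g0 x 0 2 = minv B.g0 x 2 0 := hMsym 0 2
  have hM12 : minv B.g0 x 1 2 = minv B.g0 x 2 1 := hMsym 1 2
  have hg01 : B.g0 x 0 1 = B.g0 x 1 0 := B.riem.2 x 0 1
  have hg02 : B.g0 x 0 2 = B.g0 x 2 0 := B.riem.2 x 0 2
  have hg12 : B.g0 x 1 2 = B.g0 x 2 1 := B.riem.2 x 1 2
  -- inverse identity
  have hid : ∀ (w : Vec) (i : Fin 3), (∑ j, minv B.g0 x i j * B.lo w x j) = w x i := by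
    intro w i
    have h1 : B.lo w x = (Matrix.of (B.g0 x)).mulVec (w x) := by
      funext j
      simp [Background.lo, Matrix.mulVec, dotProduct]
    have h2 : (∑ j, minv B.g0 x i j * B.lo w x j)
        = ((Matrix.of (B.g0 x))⁻¹).mulVec (B.lo w x) i := by
      simp [Matrix.mulVec, dotProduct, minv]
    rw [h2, h1, Matrix.mulVec_mulVec, hinv, Matrix.one_mulVec]
  -- pairing lemma
  have hpair : ∀ v w : Vec,
      (∑ i, ∑ j, minv B.g0 x i j * B.lo v x i * B.lo w x j)
        = ∑ i, ∑ j, B.g0 x i j * w x i * v x j := by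
    intro v w
    have h0 := hid w 0
    have h1 := hid w 1
    have h2 := hid w 2
    simp only [Fin.sum_univ_three, Background.lo] at h0 h1 h2 ⊢
    linear_combination
      (B.g0 x 0 0 * v x 0 + B.g0 x 0 1 * v x 1 + B.g0 x 0 2 * v x 2) * h0
      + (B.g0 x 1 0 * v x 0 + B.g0 x 1 1 * v x 1 + B.g0 x 1 2 * v x 2) * h1
      + (B.g0 x 2 0 * v x 0 + B.g0 x 2 1 * v x 1 + B.g0 x 2 2 * v x 2) * h2
  have horth' : (∑ i, ∑ j, B.g0 x i j * B.fr2 x i * B.fr1 x j) = 0 := by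
    have h := B.fr_orth x
    simp only [Fin.sum_univ_three] at h ⊢
    rw [hg01, hg02, hg12] at h ⊢
    linear_combination h
  have pfaa : (∑ i, ∑ j, minv B.g0 x i j * B.lo B.fr1 x i * B.lo B.fr1 x j) = 1 := by
    rw [hpair B.fr1 B.fr1]; exact B.fr_unit1 x
  have pfbb : (∑ i, ∑ j, minv B.g0 x i j * B.lo B.fr2 x i * B.lo B.fr2 x j) = 1 := by
    rw [hpair B.fr2 B.fr2]; exact B.fr_unit2 x
  have pfab : (∑ i, ∑ j, minv B.g0 x i j * B.lo B.fr1 x i * B.lo B.fr2 x j) = 0 := by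
    rw [hpair B.fr1 B.fr2]; exact horth'
  have pfba : (∑ i, ∑ j, minv B.g0 x i j * B.lo B.fr2 x i * B.lo B.fr1 x j) = 0 := by
    rw [hpair B.fr2 B.fr1]; exact B.fr_orth x
  -- |F1|² = 8 F0²
  have hstep : dot2 B.g0 B.F1 B.F1 x
      = B.F0 x ^ 2 *
        (B.c11 ^ 2 *
          ((∑ i, ∑ j, minv B.g0 x i j * B.lo B.fr1 x i * B.lo B.fr1 x j)
              * (∑ i, ∑ j, minv B.g0 x i j * B.lo B.fr1 x i * B.lo B.fr1 x j)
            - (∑ i, ∑ j, minv B.g0 x i j * B.lo B.fr1 x i * B.lo B.fr2 x j)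
              * (∑ i, ∑ j, minv B.g0 x i j * B.lo B.fr1 x i * B.lo B.fr2 x j)
            - (∑ i, ∑ j, minv B.g0 x i j * B.lo B.fr2 x i * B.lo B.fr1 x j)
              * (∑ i, ∑ j, minv B.g0 x i j * B.lo B.fr2 x i * B.lo B.fr1 x j)
            + (∑ i, ∑ j, minv B.g0 x i j * B.lo B.fr2 x i * B.lo B.fr2 x j)
              * (∑ i, ∑ j, minv B.g0 x i j * B.lo B.fr2 x i * B.lo B.fr2 x j))
        + 2 * B.c11 * B.c12 *
          ((∑ i, ∑ j, minv B.g0 x i j * B.lo B.fr1 x i * B.lo B.fr1 x j)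
              * (∑ i, ∑ j, minv B.g0 x i j * B.lo B.fr1 x i * B.lo B.fr2 x j)
            + (∑ i, ∑ j, minv B.g0 x i j * B.lo B.fr1 x i * B.lo B.fr1 x j)
              * (∑ i, ∑ j, minv B.g0 x i j * B.lo B.fr2 x i * B.lo B.fr1 x j)
            - (∑ i, ∑ j, minv B.g0 x i j * B.lo B.fr2 x i * B.lo B.fr2 x j)
              * (∑ i, ∑ j, minv B.g0 x i j * B.lo B.fr2 x i * B.lo B.fr1 x j)
            - (∑ i, ∑ j, minv B.g0 x i j * B.lo B.fr2 x i * B.lo B.fr2 x j)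
              * (∑ i, ∑ j, minv B.g0 x i j * B.lo B.fr1 x i * B.lo B.fr2 x j))
        + B.c12 ^ 2 *
          (2 * (∑ i, ∑ j, minv B.g0 x i j * B.lo B.fr1 x i * B.lo B.fr1 x j)
              * (∑ i, ∑ j, minv B.g0 x i j * B.lo B.fr2 x i * B.lo B.fr2 x j)
            + 2 * (∑ i, ∑ j, minv B.g0 x i j * B.lo B.fr1 x i * B.lo B.fr2 x j)
              * (∑ i, ∑ j, minv B.g0 x i j * B.lo B.fr2 x i * B.lo B.fr1 x j))) := by
    simp only [dot2, Background.F1, Background.omega1, Fin.sum_univ_three]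
    ring
  rw [pfaa, pfbb, pfab, pfba] at hstep
  have hF1norm : dot2 B.g0 B.F1 B.F1 x = 8 * B.F0 x ^ 2 := by
    linear_combination hstep + 2 * B.F0 x ^ 2 * B.pol
  -- expansion of |K⁽⁰⁾|²
  have hsig : dot2 B.g0 (fun y => B.sig0fam (B.u0 y / lam) y)
      (fun y => B.sig0fam (B.u0 y / lam) y) x
      = dot2 B.g0 B.K0 B.K0 x
        + Real.sin (B.u0 x / lam) * gnorm B.g0 B.u0 x
            * (∑ l, ∑ j, B.F1 x l j * B.raise B.K0 x l j)
        + 2 * Real.sin (B.u0 x / lam) ^ 2 * gnorm B.g0 B.u0 x ^ 2 * B.F0 x ^ 2 := by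
    have h8 := hF1norm
    simp only [dot2, Background.sig0fam, Background.raise, Fin.sum_univ_three] at h8 ⊢
    rw [hM01, hM02, hM12] at h8 ⊢
    linear_combination
      ((1/4) * Real.sin (B.u0 x / lam) ^ 2 * gnorm B.g0 B.u0 x ^ 2) * h8
  -- assemble
  have hsin : Real.sin (B.u0 x / lam) ^ 2
      = 1/2 - Real.cos (2 * (B.u0 x / lam)) / 2 := by
    rw [Real.sin_sq, Real.cos_sq]; ring
  have hc2 : 2 * B.u0 x / lam = 2 * (B.u0 x / lam) := mul_div_assoc 2 _ _
  rw [hc2]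
  have hham := B.ham x
  simp only [Background.R0fam]
  simp only [Fin.sum_univ_three] at hsig ⊢
  linear_combination hham - hsig
    - 2 * gnorm B.g0 B.u0 x ^ 2 * B.F0 x ^ 2 * hsin
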